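/- arXiv:1107.4976 — 7 statements merged into one kernel-verified Lean document; each statement's English description precedes it below -/
import Mathlib

section
/- For all real a > 0, b > 0, and φ > 0, the three-parameter beta density integrates to one: ∫₀¹ (Γ(a+b)/(Γ(a)Γ(b))) · φ^b · x^(b−1) · (1−x)^(a−1) · (1+(φ−1)x)^(−(a+b)) dx = 1. -/
/-!
The substitution `y = φ x / (1 + (φ - 1) x)` is an increasing bijection of `(0, 1)` onto itself
(its inverse is the same map with `φ⁻¹` in place of `φ`), and it carries the TPB kernel
`φ ^ b x ^ (b - 1) (1 - x) ^ (a - 1) (1 + (φ - 1) x) ^ (-(a + b))` to the Beta kernel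
`y ^ (b - 1) (1 - y) ^ (a - 1)`, whose integral is `Γ(b) Γ(a) / Γ(a + b)`.
-/

open MeasureTheory Real

/-- The three-parameter beta (TPB) density with parameters `a`, `b`, `φ`. -/
noncomputable def tpb (a b φ x : ℝ) : ℝ :=
  (Real.Gamma (a + b) / (Real.Gamma a * Real.Gamma b)) * φ ^ b * x ^ (b - 1) *
    (1 - x) ^ (a - 1) * (1 + (φ - 1) * x) ^ (-(a + b))

open Set ProbabilityTheory

noncomputable def tpbSubst (φ x : ℝ) : ℝ := φ * x / (1 + (φ - 1) * x)

section TPBSubst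

variable {φ x : ℝ}

lemma one_add_sub_one_mul_pos (hφ : 0 < φ) (hx : x ∈ Icc (0 : ℝ) 1) : 0 < 1 + (φ - 1) * x := by
  nlinarith [mul_nonneg hφ.le hx.1, hx.1, hx.2]

lemma hasDerivAt_tpbSubst (hx : 1 + (φ - 1) * x ≠ 0) :
    HasDerivAt (tpbSubst φ) (φ / (1 + (φ - 1) * x) ^ 2) x := by
  have hnum : HasDerivAt (fun x ↦ φ * x) φ x := by simpa using (hasDerivAt_id x).const_mul φ
  have hden : HasDerivAt (fun x ↦ 1 + (φ - 1) * x) (φ - 1) x := by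
    simpa using ((hasDerivAt_id x).const_mul (φ - 1)).const_add 1
  exact (hnum.div hden hx).congr_deriv (by field_simp; ring)

lemma one_sub_tpbSubst (hx : 1 + (φ - 1) * x ≠ 0) :
    1 - tpbSubst φ x = (1 - x) / (1 + (φ - 1) * x) := by
  rw [tpbSubst, eq_div_iff hx, sub_mul, div_mul_cancel₀ _ hx]
  ring

lemma mapsTo_tpbSubst (hφ : 0 < φ) : MapsTo (tpbSubst φ) (Ioo 0 1) (Ioo 0 1) := by
  intro x hx
  have hD := one_add_sub_one_mul_pos hφ (Ioo_subset_Icc_self hx)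
  exact ⟨div_pos (mul_pos hφ hx.1) hD, (div_lt_one hD).2 (by nlinarith [hx.2])⟩

lemma tpbSubst_tpbSubst_inv (hφ : 0 < φ) (hx : x ∈ Ioo (0 : ℝ) 1) :
    tpbSubst φ (tpbSubst φ⁻¹ x) = x := by
  have hE : φ + x * (1 - φ) ≠ 0 := by nlinarith [hx.1, hx.2]
  unfold tpbSubst
  field_simp
  rw [show φ + x * (1 - φ) + x * (φ - 1) = φ by ring, mul_div_cancel_left₀ _ hφ.ne']

lemma injOn_tpbSubst (hφ : 0 < φ) : InjOn (tpbSubst φ) (Ioo 0 1) := by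
  intro x hx y hy hxy
  have hDx := one_add_sub_one_mul_pos hφ (Ioo_subset_Icc_self hx)
  have hDy := one_add_sub_one_mul_pos hφ (Ioo_subset_Icc_self hy)
  rw [tpbSubst, tpbSubst, div_eq_div_iff hDx.ne' hDy.ne'] at hxy
  nlinarith

lemma image_tpbSubst_Ioo (hφ : 0 < φ) : tpbSubst φ '' Ioo 0 1 = Ioo 0 1 :=
  (mapsTo_tpbSubst hφ).image_subset.antisymm fun x hx ↦
    ⟨tpbSubst φ⁻¹ x, mapsTo_tpbSubst (inv_pos.2 hφ) hx, tpbSubst_tpbSubst_inv hφ hx⟩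

lemma jacobian_mul_tpbSubst_rpow (hφ : 0 < φ) (hx : x ∈ Ioo (0 : ℝ) 1) (a b : ℝ) :
    φ / (1 + (φ - 1) * x) ^ 2 * (tpbSubst φ x ^ (b - 1) * (1 - tpbSubst φ x) ^ (a - 1)) =
      φ ^ b * x ^ (b - 1) * (1 - x) ^ (a - 1) * (1 + (φ - 1) * x) ^ (-(a + b)) := by
  have hD := one_add_sub_one_mul_pos hφ (Ioo_subset_Icc_self hx)
  have hφb : φ ^ b = φ ^ (b - 1) * φ := by rw [← rpow_add_one hφ.ne', sub_add_cancel]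
  rw [one_sub_tpbSubst hD.ne', tpbSubst, div_rpow (mul_pos hφ hx.1).le hD.le,
    div_rpow (sub_pos.2 hx.2).le hD.le, mul_rpow hφ.le hx.1.le, rpow_neg hD.le, rpow_add hD,
    rpow_sub hD, rpow_sub hD, rpow_one, hφb]
  have := (rpow_pos_of_pos hD a).ne'
  have := (rpow_pos_of_pos hD b).ne'
  field_simp

theorem integral_tpb_kernel_eq_integral_beta_kernel (hφ : 0 < φ) (a b : ℝ) :
    ∫ x in Ioo (0 : ℝ) 1, φ ^ b * x ^ (b - 1) * (1 - x) ^ (a - 1) * (1 + (φ - 1) * x) ^ (-(a + b)) =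
      ∫ x in Ioo (0 : ℝ) 1, x ^ (b - 1) * (1 - x) ^ (a - 1) := by
  have hD x (hx : x ∈ Ioo (0 : ℝ) 1) := one_add_sub_one_mul_pos hφ (Ioo_subset_Icc_self hx)
  have hcv := integral_image_eq_integral_abs_deriv_smul measurableSet_Ioo
    (fun x hx ↦ (hasDerivAt_tpbSubst (hD x hx).ne').hasDerivWithinAt) (injOn_tpbSubst hφ)
    fun u ↦ u ^ (b - 1) * (1 - u) ^ (a - 1)
  rw [image_tpbSubst_Ioo hφ] at hcv
  rw [hcv]
  refine (setIntegral_congr_fun measurableSet_Ioo fun x hx ↦ ?_).symm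
  rw [abs_of_pos (div_pos hφ (pow_pos (hD x hx) 2)), smul_eq_mul,
    jacobian_mul_tpbSubst_rpow hφ hx]

end TPBSubst

namespace ProbabilityTheory

theorem integral_Ioo_rpow_mul_one_sub_rpow_eq_beta {α β : ℝ} (hα : 0 < α) (hβ : 0 < β) :
    ∫ x in Ioo (0 : ℝ) 1, x ^ (α - 1) * (1 - x) ^ (β - 1) = beta α β := by
  have hpdf : betaPDFReal α β =
      (Ioo (0 : ℝ) 1).indicator fun x ↦ (beta α β)⁻¹ * (x ^ (α - 1) * (1 - x) ^ (β - 1)) := by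
    ext x
    simp only [betaPDFReal, indicator, mem_Ioo, one_div, mul_assoc]
  have hone : ∫ x, betaPDFReal α β x = 1 := by
    rw [integral_eq_lintegral_of_nonneg_ae]
    · exact congrArg ENNReal.toReal (lintegral_betaPDF_eq_one hα hβ)
    · refine Filter.Eventually.of_forall fun x ↦ ?_
      rw [hpdf]
      exact indicator_nonneg (fun x hx ↦ mul_nonneg (inv_nonneg.2 (beta_pos hα hβ).le)
        (mul_nonneg (rpow_nonneg hx.1.le _) (rpow_nonneg (sub_nonneg.2 hx.2.le) _))) x
    · exact (measurable_betaPDFReal α β).aestronglyMeasurable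
  rw [hpdf, integral_indicator measurableSet_Ioo, integral_const_mul] at hone
  have := (beta_pos hα hβ).ne'
  field_simp at hone
  exact hone

end ProbabilityTheory

/-- The TPB density integrates to one on (0,1). -/
theorem tpb_integral_eq_one (a b φ : ℝ) (ha : 0 < a) (hb : 0 < b) (hφ : 0 < φ) :
    ∫ x in Set.Ioo (0 : ℝ) 1, tpb a b φ x = 1 := by
  have hGa := (Gamma_pos_of_pos ha).ne'
  have hGb := (Gamma_pos_of_pos hb).ne'
  calc ∫ x in Ioo (0 : ℝ) 1, tpb a b φ x
      = Gamma (a + b) / (Gamma a * Gamma b) * ∫ x in Ioo (0 : ℝ) 1,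
          φ ^ b * x ^ (b - 1) * (1 - x) ^ (a - 1) * (1 + (φ - 1) * x) ^ (-(a + b)) := by
        rw [← integral_const_mul]
        simp only [tpb, mul_assoc]
    _ = Gamma (a + b) / (Gamma a * Gamma b) * beta b a := by
        rw [integral_tpb_kernel_eq_integral_beta_kernel hφ,
          integral_Ioo_rpow_mul_one_sub_rpow_eq_beta hb ha]
    _ = 1 := by
        rw [beta, add_comm b a]
        field_simp [(Gamma_pos_of_pos (add_pos ha hb)).ne']
end

section
/- (Gamma-Gamma mixing step of Proposition 1, part 1.) For all real a > 0, b > 0, φ > 0 and all τ > 0, ∫₀^∞ gammaPDF(a, λ)(τ) · gammaPDF(b, φ)(λ) dλ = (Γ(a+b)/(Γ(a)Γ(b))) φ^b τ^(a−1) (φ+τ)^(−(a+b)). That is, mixing a Gamma(a, λ) density in its rate parameter λ against a Gamma(b, φ) density yields the scaled inverted beta density on τ. -/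
open MeasureTheory Real

/-- The Gamma density with shape `μ` and rate `ν`, for positive arguments. -/
noncomputable def gammaPDF (μ ν x : ℝ) : ℝ :=
  ν ^ μ * x ^ (μ - 1) * Real.exp (-ν * x) / Real.Gamma μ

/-- Gamma-Gamma mixing step of Proposition 1, part 1: mixing a Gamma(a, λ) density over its
rate λ against a Gamma(b, φ) density yields the scaled inverted beta density on τ. -/
theorem gamma_gamma_mixture (a b φ : ℝ) (ha : 0 < a) (hb : 0 < b) (hφ : 0 < φ)
    (τ : ℝ) (hτ : 0 < τ) :
    ∫ l in Set.Ioi (0 : ℝ), gammaPDF a l τ * gammaPDF b φ l =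
      (Real.Gamma (a + b) / (Real.Gamma a * Real.Gamma b)) * φ ^ b *
        τ ^ (a - 1) * (φ + τ) ^ (-(a + b)) := by
  have hφτ : 0 < φ + τ := by linarith
  have hGa := Real.Gamma_pos_of_pos ha
  have hGb := Real.Gamma_pos_of_pos hb
  have key := Real.integral_rpow_mul_exp_neg_mul_Ioi (a := a + b) (r := φ + τ)
    (by linarith) hφτ
  have hcong : ∫ l in Set.Ioi (0:ℝ), gammaPDF a l τ * gammaPDF b φ l
      = ∫ l in Set.Ioi (0:ℝ), (τ ^ (a-1) * φ ^ b / (Real.Gamma a * Real.Gamma b)) *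
          (l ^ (a + b - 1) * Real.exp (-((φ + τ) * l))) := by
    refine setIntegral_congr_fun measurableSet_Ioi fun l hl => ?_
    have hl : (0:ℝ) < l := hl
    simp only [gammaPDF]
    rw [show a + b - 1 = a + (b - 1) by ring, Real.rpow_add hl]
    rw [show -((φ + τ) * l) = -l * τ + -φ * l by ring]
    rw [Real.exp_add]
    field_simp
  rw [hcong, integral_const_mul, key, one_div, Real.inv_rpow hφτ.le,
    ← Real.rpow_neg hφτ.le]
  ring
end

section
/- (Proposition 1, part 1: equality of marginal densities.) Let a > 0, b > 0, φ > 0. For every real θ, ∫₀¹ normalPDF(0, 1/ρ − 1)(θ) · f(ρ; a, b, φ) dρ = ∫₀^∞ ∫₀^∞ normalPDF(0, τ)(θ) · gammaPDF(a, λ)(τ) · gammaPDF(b, φ)(λ) dλ dτ. That is, the TPB normal scale mixture TPBN(a, b, φ) has the same marginal density on θ as the hierarchy θ | τ ~ N(0, τ), τ ~ Gamma(a, λ), λ ~ Gamma(b, φ). -/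
open MeasureTheory Real

/-- The centered normal density with variance `v`. -/
noncomputable def normalPDF (v θ : ℝ) : ℝ :=
  (2 * Real.pi * v) ^ (-(1 : ℝ) / 2) * Real.exp (-θ ^ 2 / (2 * v))

/-!
Integrating out `λ`, the hierarchy `τ ~ Gamma(a, λ)`, `λ ~ Gamma(b, φ)` gives `τ` the beta prime
distribution `β'(a, b)` scaled by `φ`, with density
`Γ(a+b)/(Γ(a)Γ(b)) φ^b τ^(a-1) (τ+φ)^(-(a+b))`. The substitution `ρ = 1/(1+τ)`, whose Jacobian
is `(1+τ)⁻²`, turns this density into the TPB density `f(ρ; a, b, φ)` and turns the normal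
variance `1/ρ - 1` back into `τ`.
-/

open Set

noncomputable def scaledBetaPrimePDF (a b φ τ : ℝ) : ℝ :=
  Real.Gamma (a + b) / (Real.Gamma a * Real.Gamma b) * φ ^ b * τ ^ (a - 1) *
    (τ + φ) ^ (-(a + b))

lemma gammaPDF_mul_gammaPDF {a b φ τ l : ℝ} (hl : 0 < l) :
    gammaPDF a l τ * gammaPDF b φ l =
      τ ^ (a - 1) * φ ^ b / (Real.Gamma a * Real.Gamma b) *
        (l ^ (a + b - 1) * rexp (-((τ + φ) * l))) := by
  have hpow : l ^ (a + b - 1) = l ^ a * l ^ (b - 1) := by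
    rw [← rpow_add hl]; ring_nf
  have hexp : rexp (-((τ + φ) * l)) = rexp (-l * τ) * rexp (-φ * l) := by
    rw [← exp_add]; ring_nf
  simp only [gammaPDF, hpow, hexp]
  ring

lemma integral_gammaPDF_mul_gammaPDF {a b φ τ : ℝ} (hab : 0 < a + b) (hτφ : 0 < τ + φ) :
    ∫ l in Ioi 0, gammaPDF a l τ * gammaPDF b φ l = scaledBetaPrimePDF a b φ τ := by
  rw [setIntegral_congr_fun measurableSet_Ioi fun l hl => gammaPDF_mul_gammaPDF hl,
    integral_const_mul, integral_rpow_mul_exp_neg_mul_Ioi hab hτφ, one_div,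
    inv_rpow hτφ.le, ← rpow_neg hτφ.le, scaledBetaPrimePDF]
  ring

lemma tpb_inv_one_add {a b φ τ : ℝ} (hτ : 0 ≤ τ) (hτφ : 0 ≤ τ + φ) :
    tpb a b φ (1 + τ)⁻¹ = (1 + τ) ^ 2 * scaledBetaPrimePDF a b φ τ := by
  have hu : 0 < 1 + τ := by linarith
  have h1 : 1 - (1 + τ)⁻¹ = τ * (1 + τ)⁻¹ := by field_simp; ring
  have h2 : 1 + (φ - 1) * (1 + τ)⁻¹ = (τ + φ) * (1 + τ)⁻¹ := by field_simp; ring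
  have hjac : (1 + τ)⁻¹ ^ (b - 1) * (1 + τ)⁻¹ ^ (a - 1) * (1 + τ)⁻¹ ^ (-(a + b)) =
      (1 + τ) ^ 2 := by
    rw [← rpow_add (inv_pos.2 hu), ← rpow_add (inv_pos.2 hu),
      show b - 1 + (a - 1) + -(a + b) = -(2 : ℕ) by push_cast; ring,
      rpow_neg (inv_nonneg.2 hu.le), rpow_natCast, inv_pow, inv_inv]
  have hu' := (inv_pos.2 hu).le
  simp only [tpb, scaledBetaPrimePDF, h1, h2, mul_rpow hτ hu', mul_rpow hτφ hu']
  linear_combination (Real.Gamma (a + b) / (Real.Gamma a * Real.Gamma b) * φ ^ b *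
    τ ^ (a - 1) * (τ + φ) ^ (-(a + b))) * hjac

lemma image_inv_one_add_Ioi : (fun τ : ℝ => (1 + τ)⁻¹) '' Ioi 0 = Ioo 0 1 := by
  ext ρ
  constructor
  · rintro ⟨τ, hτ : 0 < τ, rfl⟩
    exact ⟨by positivity, inv_lt_one_of_one_lt₀ (by linarith)⟩
  · rintro ⟨hρ0, hρ1⟩
    refine ⟨ρ⁻¹ - 1, sub_pos.2 ((one_lt_inv₀ hρ0).2 hρ1), ?_⟩
    simp

lemma injOn_inv_one_add_Ioi : InjOn (fun τ : ℝ => (1 + τ)⁻¹) (Ioi 0) := by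
  intro x _ y _ h
  simpa using inv_injective h

lemma integral_Ioo_zero_one_eq_integral_Ioi_inv_one_add {E : Type*} [NormedAddCommGroup E]
    [NormedSpace ℝ E] (g : ℝ → E) :
    ∫ ρ in Ioo 0 1, g ρ = ∫ τ in Ioi 0, ((1 + τ) ^ 2)⁻¹ • g (1 + τ)⁻¹ := by
  have hderiv (τ : ℝ) (hτ : τ ∈ Ioi 0) :
      HasDerivWithinAt (fun τ : ℝ => (1 + τ)⁻¹) (-((1 + τ) ^ 2)⁻¹) (Ioi 0) τ := by
    have hu : 1 + τ ≠ 0 := by have : (0 : ℝ) < τ := hτ; positivity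
    exact ((((hasDerivAt_id τ).const_add 1).inv hu).hasDerivWithinAt).congr_deriv
      (by rw [neg_div, one_div, id])
  rw [← image_inv_one_add_Ioi, integral_image_eq_integral_abs_deriv_smul measurableSet_Ioi
    hderiv injOn_inv_one_add_Ioi]
  refine setIntegral_congr_fun measurableSet_Ioi fun τ _ => ?_
  rw [abs_neg, abs_of_nonneg (by positivity)]

/-- Proposition 1, part 1: the TPB normal scale mixture TPBN(a, b, φ) has the same marginal
density on θ as the hierarchy θ | τ ~ N(0, τ), τ ~ Gamma(a, λ), λ ~ Gamma(b, φ). -/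
theorem tpbn_marginal_eq_gamma_gamma_marginal (a b φ : ℝ) (ha : 0 < a) (hb : 0 < b)
    (hφ : 0 < φ) (θ : ℝ) :
    ∫ ρ in Set.Ioo (0 : ℝ) 1, normalPDF (1 / ρ - 1) θ * tpb a b φ ρ =
      ∫ τ in Set.Ioi (0 : ℝ), ∫ l in Set.Ioi (0 : ℝ),
        normalPDF τ θ * gammaPDF a l τ * gammaPDF b φ l := by
  rw [integral_Ioo_zero_one_eq_integral_Ioi_inv_one_add]
  refine setIntegral_congr_fun measurableSet_Ioi fun τ (hτ : 0 < τ) => ?_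
  have hτφ : 0 < τ + φ := by linarith
  simp only [mul_assoc, integral_const_mul]
  rw [integral_gammaPDF_mul_gammaPDF (add_pos ha hb) hτφ, tpb_inv_one_add hτ.le hτφ.le, one_div,
    inv_inv, add_sub_cancel_left, smul_eq_mul]
  field_simp
end

section
/- (Half-Cauchy as a scale mixture of gammas, density formula.) For all φ > 0 and τ > 0, ∫₀^∞ gammaPDF(1/2, λ)(τ) · gammaPDF(1/2, φ)(λ) dλ = √φ / (π √τ (τ + φ)). -/
open MeasureTheory Real

/-- Half-Cauchy as a scale mixture of gammas: density formula. -/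
theorem gamma_half_mixture_density (φ τ : ℝ) (hφ : 0 < φ) (hτ : 0 < τ) :
    ∫ l in Set.Ioi (0 : ℝ), gammaPDF (1 / 2) l τ * gammaPDF (1 / 2) φ l =
      Real.sqrt φ / (Real.pi * Real.sqrt τ * (τ + φ)) := by
  have hsum : 0 < τ + φ := by linarith
  have key : ∀ l ∈ Set.Ioi (0:ℝ), gammaPDF (1/2) l τ * gammaPDF (1/2) φ l
      = (Real.sqrt φ / (Real.pi * Real.sqrt τ)) *
        (l ^ ((1:ℝ) - 1) * Real.exp (-((τ+φ)*l))) := by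
    intro l hl
    have hl : (0:ℝ) < l := hl
    unfold gammaPDF
    rw [Real.Gamma_one_half_eq]
    have e1 : (1/2 - 1 : ℝ) = -(1/2) := by norm_num
    rw [e1, Real.rpow_neg hl.le, Real.rpow_neg hτ.le,
      ← Real.sqrt_eq_rpow, ← Real.sqrt_eq_rpow, ← Real.sqrt_eq_rpow]
    have h2 : Real.exp (-l * τ) * Real.exp (-φ * l) = Real.exp (-((τ+φ)*l)) := by
      rw [← Real.exp_add]; ring_nf
    have hsl : Real.sqrt l ≠ 0 := (Real.sqrt_pos.mpr hl).ne'
    have hst : Real.sqrt τ ≠ 0 := (Real.sqrt_pos.mpr hτ).ne'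
    have hsp : Real.sqrt Real.pi ≠ 0 := (Real.sqrt_pos.mpr Real.pi_pos).ne'
    have hpi : Real.pi ≠ 0 := Real.pi_ne_zero
    rw [show ((1:ℝ)-1)=0 by norm_num, Real.rpow_zero, one_mul, ← h2]
    have hπ : Real.sqrt Real.pi * Real.sqrt Real.pi = Real.pi :=
      Real.mul_self_sqrt Real.pi_pos.le
    field_simp
    ring_nf
    rw [Real.sq_sqrt Real.pi_pos.le]
  rw [setIntegral_congr_fun measurableSet_Ioi key, integral_const_mul,
    Real.integral_rpow_mul_exp_neg_mul_Ioi one_pos hsum, Real.Gamma_one,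
    Real.rpow_one]
  field_simp
end

section
/- (Half-Cauchy as a scale mixture of gammas, pushforward form.) Let φ > 0 and let μ be the measure on (0,∞) with Lebesgue density τ ↦ √φ / (π √τ (τ + φ)). Then the pushforward of μ under the square root map τ ↦ √τ is the half-Cauchy measure on (0,∞) with scale √φ, i.e., the measure with Lebesgue density s ↦ 2√φ / (π (s² + φ)). Consequently, if τ ~ Gamma(1/2, λ) mixed over λ ~ Gamma(1/2, φ), then τ^(1/2) ~ C⁺(0, φ^(1/2)). -/
open MeasureTheory Real

lemma sqrt_preimage_inter_Ioi (A : Set ℝ) :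
    Real.sqrt ⁻¹' A ∩ Set.Ioi 0 = (fun s : ℝ => s ^ 2) '' (A ∩ Set.Ioi 0) := by
  ext τ
  constructor
  · rintro ⟨hτA, hτ⟩
    exact ⟨Real.sqrt τ, ⟨hτA, Real.sqrt_pos.2 hτ⟩, Real.sq_sqrt hτ.le⟩
  · rintro ⟨s, ⟨hsA, hs⟩, rfl⟩
    exact ⟨by simpa [Real.sqrt_sq hs.le] using hsA, Set.mem_Ioi.2 (pow_pos hs 2)⟩

theorem map_sqrt_withDensity_Ioi (f : ℝ → ENNReal) :
    Measure.map Real.sqrt ((volume.restrict (Set.Ioi 0)).withDensity f) =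
      (volume.restrict (Set.Ioi 0)).withDensity fun s => ENNReal.ofReal (2 * s) * f (s ^ 2) := by
  ext A hA
  rw [Measure.map_apply continuous_sqrt.measurable hA,
    withDensity_apply _ (continuous_sqrt.measurable hA), withDensity_apply _ hA,
    Measure.restrict_restrict (continuous_sqrt.measurable hA), Measure.restrict_restrict hA,
    sqrt_preimage_inter_Ioi]
  exact lintegral_image_eq_lintegral_deriv_mul_of_monotoneOn (hA.inter measurableSet_Ioi)
    (fun s _ => by simpa using (hasDerivAt_pow 2 s).hasDerivWithinAt)
    (fun a ha _ _ hab => pow_le_pow_left₀ ha.2.le hab 2) f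

/-- Half-Cauchy as a scale mixture of gammas, pushforward form: if τ has density
√φ / (π √τ (τ + φ)) on (0,∞) then √τ is half-Cauchy with scale √φ. -/
theorem sqrt_pushforward_half_cauchy (φ : ℝ) (hφ : 0 < φ) :
    Measure.map Real.sqrt
        ((volume.restrict (Set.Ioi (0 : ℝ))).withDensity fun τ =>
          ENNReal.ofReal (Real.sqrt φ / (Real.pi * Real.sqrt τ * (τ + φ)))) =
      (volume.restrict (Set.Ioi (0 : ℝ))).withDensity fun s =>
        ENNReal.ofReal (2 * Real.sqrt φ / (Real.pi * (s ^ 2 + φ))) := by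
  rw [map_sqrt_withDensity_Ioi]
  refine withDensity_congr_ae ((ae_restrict_mem measurableSet_Ioi).mono fun s (hs : 0 < s) => ?_)
  beta_reduce
  rw [Real.sqrt_sq hs.le, ← ENNReal.ofReal_mul (by positivity)]
  congr 1
  field_simp
end

section
/- (Horseshoe marginal density, case a = 1/2, b = 1/2, φ = 1.) For every real β ≠ 0, ∫₀¹ normalPDF(0, 1/ρ − 1)(β) · f(ρ; 1/2, 1/2, 1) dρ = (1/(√2 · π^(3/2))) · e^(β²/2) · Γ(0, β²/2), where Γ(0, z) = ∫_z^∞ t^(−1) e^(−t) dt is the upper incomplete gamma function at shape 0. -/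
open MeasureTheory Real

/-- The upper incomplete gamma function Γ(s, z) = ∫_z^∞ t^(s−1) e^(−t) dt. -/
noncomputable def upperGamma (s z : ℝ) : ℝ := ∫ t in Set.Ioi z, t ^ (s - 1) * Real.exp (-t)

/-!
For `φ = 1` the TPB density is the beta density, here `1 / (π √(ρ (1 - ρ)))`, and the normal
density with variance `(1 - ρ) / ρ` contributes `√ρ / √(2π (1 - ρ)) · exp (-z ρ / (1 - ρ))` with
`z = β² / 2`. So the integrand is `exp (-z ρ / (1 - ρ)) / (√2 π^(3/2) (1 - ρ))`, and the
substitution `t = z / (1 - ρ)`, which maps `(0, 1)` onto `(z, ∞)` with `dt / t = dρ / (1 - ρ)`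
and `-t = -z - z ρ / (1 - ρ)`, turns its integral into `e^z Γ(0, z) / (√2 π^(3/2))`.
-/

open Set

lemma tpb_one (a b x : ℝ) :
    tpb a b 1 x = Gamma (a + b) / (Gamma a * Gamma b) * x ^ (b - 1) * (1 - x) ^ (a - 1) := by
  simp [tpb]

lemma tpb_half_half_one {ρ : ℝ} (h0 : 0 < ρ) (h1 : ρ < 1) :
    tpb (1 / 2) (1 / 2) 1 ρ = 1 / (π * √ρ * √(1 - ρ)) := by
  rw [tpb_one, add_halves, Gamma_one, Gamma_one_half_eq,
    show (1 : ℝ) / 2 - 1 = -(1 / 2) by norm_num, rpow_neg h0.le, rpow_neg (sub_pos.2 h1).le, ← sqrt_eq_rpow, ← sqrt_eq_rpow]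
  field_simp
  rw [sq_sqrt pi_pos.le]

lemma normalPDF_of_pos {v : ℝ} (hv : 0 < v) (θ : ℝ) :
    normalPDF v θ = exp (-θ ^ 2 / (2 * v)) / √(2 * π * v) := by
  rw [normalPDF, neg_div, rpow_neg (by positivity), ← sqrt_eq_rpow, inv_mul_eq_div]

lemma normalPDF_mul_tpb_half_half_one (β : ℝ) {ρ : ℝ} (h0 : 0 < ρ) (h1 : ρ < 1) :
    normalPDF (1 / ρ - 1) β * tpb (1 / 2) (1 / 2) 1 ρ =
      1 / (√2 * π ^ ((3 : ℝ) / 2)) * (exp (-(β ^ 2 / 2) * ρ / (1 - ρ)) / (1 - ρ)) := by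
  have h1ρ : 0 < 1 - ρ := sub_pos.2 h1
  have hv : 1 / ρ - 1 = (1 - ρ) / ρ := by field_simp
  rw [normalPDF_of_pos (by rw [hv]; positivity), tpb_half_half_one h0 h1, hv,
    show (3 : ℝ) / 2 = 1 + 1 / 2 by norm_num, rpow_add pi_pos, rpow_one, ← sqrt_eq_rpow,
    sqrt_mul' _ (by positivity), sqrt_mul' _ pi_pos.le, sqrt_div' _ h0.le]
  have hexp : -β ^ 2 / (2 * ((1 - ρ) / ρ)) = -(β ^ 2 / 2) * ρ / (1 - ρ) := by
    field_simp
  rw [hexp]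
  field_simp
  rw [sq_sqrt h1ρ.le]

section Substitution

variable {z : ℝ}

lemma image_div_one_sub_Ioo (hz : 0 < z) : (fun ρ => z / (1 - ρ)) '' Ioo 0 1 = Ioi z := by
  ext t
  constructor
  · rintro ⟨ρ, ⟨h0, h1⟩, rfl⟩
    exact (lt_div_iff₀ (sub_pos.2 h1)).2 (by nlinarith)
  · intro (ht : z < t)
    have ht0 : 0 < t := hz.trans ht
    refine ⟨1 - z / t, ⟨?_, ?_⟩, ?_⟩
    · linarith [(div_lt_one ht0).2 ht]
    · linarith [div_pos hz ht0]
    · simp only [sub_sub_cancel]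
      field_simp

lemma injective_div_one_sub (hz : z ≠ 0) : Function.Injective fun ρ : ℝ => z / (1 - ρ) := by
  intro a b hab
  simpa [div_eq_mul_inv, hz] using hab

lemma hasDerivAt_div_one_sub (z : ℝ) {ρ : ℝ} (hρ : ρ ≠ 1) :
    HasDerivAt (fun ρ => z / (1 - ρ)) (z / (1 - ρ) ^ 2) ρ := by
  refine ((hasDerivAt_const ρ z).fun_div ((hasDerivAt_id' ρ).const_sub 1)
    (sub_ne_zero.2 hρ.symm)).congr_deriv ?_
  ring

lemma upperGamma_eq_integral_Ioo (s : ℝ) (hz : 0 < z) :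
    upperGamma s z =
      ∫ ρ in Ioo 0 1, z / (1 - ρ) ^ 2 * ((z / (1 - ρ)) ^ (s - 1) * exp (-(z / (1 - ρ)))) := by
  rw [upperGamma, ← image_div_one_sub_Ioo hz,
    integral_image_eq_integral_abs_deriv_smul measurableSet_Ioo
      (fun ρ hρ => (hasDerivAt_div_one_sub z hρ.2.ne).hasDerivWithinAt)
      (injective_div_one_sub hz.ne').injOn]
  refine setIntegral_congr_fun measurableSet_Ioo fun ρ hρ => ?_
  rw [smul_eq_mul, abs_of_pos (div_pos hz (pow_pos (sub_pos.2 hρ.2) 2))]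

lemma upperGamma_zero_eq_integral_Ioo (hz : 0 < z) :
    upperGamma 0 z = exp (-z) * ∫ ρ in Ioo 0 1, exp (-z * ρ / (1 - ρ)) / (1 - ρ) := by
  rw [upperGamma_eq_integral_Ioo 0 hz, ← integral_const_mul]
  refine setIntegral_congr_fun measurableSet_Ioo fun ρ ⟨_, h1⟩ => ?_
  have h1ρ : 1 - ρ ≠ 0 := sub_ne_zero.2 h1.ne'
  rw [zero_sub, rpow_neg_one, mul_div_assoc', ← exp_add]
  field_simp
  ring_nf

end Substitution

/-- Horseshoe marginal density, case a = 1/2, b = 1/2, φ = 1. -/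
theorem horseshoe_marginal_density (β : ℝ) (hβ : β ≠ 0) :
    ∫ ρ in Set.Ioo (0 : ℝ) 1, normalPDF (1 / ρ - 1) β * tpb (1 / 2) (1 / 2) 1 ρ =
      (1 / (Real.sqrt 2 * Real.pi ^ ((3 : ℝ) / 2))) * Real.exp (β ^ 2 / 2) *
        upperGamma 0 (β ^ 2 / 2) := by
  have hz : 0 < β ^ 2 / 2 := by positivity
  rw [upperGamma_zero_eq_integral_Ioo hz, mul_assoc, ← mul_assoc (exp _), ← exp_add,
    add_neg_cancel, exp_zero, one_mul, ← integral_const_mul]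
  exact setIntegral_congr_fun measurableSet_Ioo fun ρ hρ =>
    normalPDF_mul_tpb_half_half_one β hρ.1 hρ.2
end

section
/- (Marginal density, case a = 3/2, b = 1/2, φ = 1.) For every real β ≠ 0, ∫₀¹ normalPDF(0, 1/ρ − 1)(β) · f(ρ; 3/2, 1/2, 1) dρ = (√2/π^(3/2)) · {1 − (1/2) e^(β²/2) β² Γ(0, β²/2)}, where Γ(0, z) = ∫_z^∞ t^(−1) e^(−t) dt is the upper incomplete gamma function at shape 0. -/
open MeasureTheory Real

/-!
Put `c = β² / 2` and `v = 1 / ρ - 1`. The TPB(3/2, 1/2, 1) density equals `(2 / π) √v`, which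
cancels the factor `(2πv)^(-1/2)` of the normal density, and `β² / (2v) = c / (1 - ρ) - c`; so the
integrand is `(√2 / π^(3/2)) e^c e^(-c / (1 - ρ))`. After `ρ ↦ 1 - ρ` it remains to show
`∫₀¹ e^(-c/u) du = e^(-c) - c Γ(0, c)`. Since `∂_z Γ(s, z) = -z^(s-1) e^(-z)`, an antiderivative is
`u e^(-c/u) - c Γ(0, c/u)`, and it tends to `0` as `u → 0⁺` because `Γ(s, z) → 0` as `z → ∞`.
-/

open Set Filter Topology

section UpperGamma

variable (s : ℝ) {z : ℝ}

lemma continuousOn_upperGamma_integrand :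
    ContinuousOn (fun t : ℝ => t ^ (s - 1) * exp (-t)) (Ioi 0) :=
  (continuousOn_id.rpow_const fun _ ht => Or.inl (ne_of_gt ht)).mul continuousOn_id.neg.rexp

lemma integrableOn_upperGamma_integrand (hz : 0 < z) :
    IntegrableOn (fun t : ℝ => t ^ (s - 1) * exp (-t)) (Ioi z) :=
  integrable_of_isBigO_exp_neg one_half_pos
    ((continuousOn_upperGamma_integrand s).mono fun _ ht => hz.trans_le ht)
    ((Real.Gamma_integrand_isLittleO (s - 1)).isBigO.congr_left fun _ => mul_comm _ _)

lemma hasDerivAt_upperGamma (hz : 0 < z) :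
    HasDerivAt (upperGamma s) (-(z ^ (s - 1) * exp (-z))) z := by
  have hp : 0 < z / 2 := half_pos hz
  have hsplit : ∀ᶠ w in 𝓝 z,
      upperGamma s (z / 2) - ∫ t in z / 2..w, t ^ (s - 1) * exp (-t) = upperGamma s w := by
    filter_upwards [Ioi_mem_nhds hz] with w hw
    rw [← intervalIntegral.integral_Ioi_sub_Ioi' (integrableOn_upperGamma_integrand s hp)
      (integrableOn_upperGamma_integrand s hw), upperGamma, upperGamma, sub_sub_cancel]
  have hftc : HasDerivAt (fun w => ∫ t in z / 2..w, t ^ (s - 1) * exp (-t))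
      (z ^ (s - 1) * exp (-z)) z :=
    intervalIntegral.integral_hasDerivAt_right
      ((intervalIntegrable_iff_integrableOn_Ioc_of_le (half_le_self hz.le)).2
        ((integrableOn_upperGamma_integrand s hp).mono_set Ioc_subset_Ioi_self))
      ((continuousOn_upperGamma_integrand s).stronglyMeasurableAtFilter isOpen_Ioi z hz)
      ((continuousOn_upperGamma_integrand s).continuousAt (Ioi_mem_nhds hz))
  exact (hftc.const_sub _).congr_of_eventuallyEq (hsplit.mono fun _ h => h.symm)

lemma tendsto_upperGamma_atTop : Tendsto (upperGamma s) atTop (𝓝 0) :=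
  tendsto_integral_Ioi_zero tendsto_id

end UpperGamma

lemma hasDerivAt_mul_exp_neg_div_sub_upperGamma {c u : ℝ} (hc : 0 < c) (hu : 0 < u) :
    HasDerivAt (fun u => u * exp (-(c / u)) - c * upperGamma 0 (c / u)) (exp (-(c / u))) u := by
  have hq : HasDerivAt (fun u => c / u) (-c / u ^ 2) u := by
    simpa only [div_eq_mul_inv, neg_mul, mul_neg] using (hasDerivAt_inv hu.ne').const_mul c
  have hΓ := (hasDerivAt_upperGamma 0 (div_pos hc hu)).comp u hq
  refine (((hasDerivAt_id u).mul hq.neg.exp).sub (hΓ.const_mul c)).congr_deriv ?_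
  simp only [zero_sub, rpow_neg_one, id, Pi.neg_apply]
  field_simp
  ring

lemma integral_exp_neg_div {c : ℝ} (hc : 0 ≤ c) :
    ∫ u in (0 : ℝ)..1, exp (-(c / u)) = exp (-c) - c * upperGamma 0 c := by
  rcases hc.eq_or_lt with rfl | hc
  · simp
  have hq : Tendsto (fun u => c / u) (𝓝[>] 0) atTop := by
    simpa only [div_eq_mul_inv] using tendsto_inv_nhdsGT_zero.const_mul_atTop hc
  have h0 : Tendsto (fun u => u * exp (-(c / u)) - c * upperGamma 0 (c / u)) (𝓝[>] 0) (𝓝 0) := by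
    simpa using ((tendsto_id.mono_left nhdsWithin_le_nhds).mul
      (tendsto_exp_neg_atTop_nhds_zero.comp hq)).sub
      (((tendsto_upperGamma_atTop 0).comp hq).const_mul c)
  have h1 := (hasDerivAt_mul_exp_neg_div_sub_upperGamma hc one_pos).continuousAt.tendsto.mono_left
    (nhdsWithin_le_nhds (s := Iio 1))
  have hint : IntervalIntegrable (fun u => exp (-(c / u))) volume 0 1 := by
    refine (intervalIntegrable_iff_integrableOn_Ioc_of_le zero_le_one).2
      (Measure.integrableOn_of_bounded (M := 1) measure_Ioc_lt_top.ne (by fun_prop) ?_)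
    filter_upwards [ae_restrict_mem measurableSet_Ioc] with u hu
    rw [norm_of_nonneg (exp_pos _).le, exp_le_one_iff, neg_nonpos]
    exact div_nonneg hc.le hu.1.le
  rw [intervalIntegral.integral_eq_sub_of_hasDerivAt_of_tendsto zero_lt_one
    (fun u hu => hasDerivAt_mul_exp_neg_div_sub_upperGamma hc hu.1) hint h0 h1]
  simp

lemma normalPDF_mul_sqrt {v : ℝ} (hv : 0 < v) (θ : ℝ) :
    normalPDF v θ * √v = exp (-θ ^ 2 / (2 * v)) / √(2 * π) := by
  rw [normalPDF, show -(1 : ℝ) / 2 = -(1 / 2) by norm_num, rpow_neg (by positivity),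
    ← sqrt_eq_rpow, sqrt_mul (by positivity)]
  field_simp

lemma tpb_three_halves_one_half_one {ρ : ℝ} (h0 : 0 < ρ) :
    tpb (3 / 2) (1 / 2) 1 ρ = 2 / π * √(1 / ρ - 1) := by
  have hΓ : Gamma (3 / 2) = √π / 2 := by
    rw [show (3 : ℝ) / 2 = 1 / 2 + 1 by norm_num, Gamma_add_one (by norm_num), Gamma_one_half_eq]
    ring
  rw [tpb, show (3 : ℝ) / 2 + 1 / 2 = 2 by norm_num, Gamma_two, hΓ, Gamma_one_half_eq,
    show (1 : ℝ) / 2 - 1 = -(1 / 2) by norm_num, show (3 : ℝ) / 2 - 1 = 1 / 2 by norm_num,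
    one_rpow, rpow_neg h0.le, ← sqrt_eq_rpow, ← sqrt_eq_rpow, sub_self, zero_mul, add_zero,
    one_rpow, show 1 / ρ - 1 = (1 - ρ) / ρ by field_simp, sqrt_div' _ h0.le]
  field_simp
  rw [sq_sqrt pi_pos.le]
  ring

lemma normalPDF_mul_tpb_three_halves_one_half_one {ρ : ℝ} (hρ : ρ ∈ Ioo 0 1) (β : ℝ) :
    normalPDF (1 / ρ - 1) β * tpb (3 / 2) (1 / 2) 1 ρ =
      √2 / π ^ ((3 : ℝ) / 2) * exp (β ^ 2 / 2) * exp (-(β ^ 2 / 2 / (1 - ρ))) := by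
  obtain ⟨h0, h1⟩ := hρ
  have hv : 0 < 1 / ρ - 1 := by rw [sub_pos, lt_div_iff₀ h0]; linarith
  have hexp : -β ^ 2 / (2 * (1 / ρ - 1)) = β ^ 2 / 2 + -(β ^ 2 / 2 / (1 - ρ)) := by
    field_simp [(sub_pos.2 h1).ne']
    ring
  have hπ : π ^ ((3 : ℝ) / 2) = π * √π := by
    rw [show (3 : ℝ) / 2 = 1 + 1 / 2 by norm_num, rpow_add pi_pos, rpow_one, ← sqrt_eq_rpow]
  rw [tpb_three_halves_one_half_one h0, mul_left_comm, mul_assoc, normalPDF_mul_sqrt hv,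
    hexp, exp_add, hπ, sqrt_mul zero_le_two]
  field_simp
  rw [sq_sqrt zero_le_two]

theorem marginal_density_a_three_halves_general (β : ℝ) :
    ∫ ρ in Set.Ioo (0 : ℝ) 1, normalPDF (1 / ρ - 1) β * tpb (3 / 2) (1 / 2) 1 ρ =
      (Real.sqrt 2 / Real.pi ^ ((3 : ℝ) / 2)) *
        (1 - (1 / 2) * Real.exp (β ^ 2 / 2) * β ^ 2 * upperGamma 0 (β ^ 2 / 2)) := by
  set c := β ^ 2 / 2
  have hc : 0 ≤ c := by positivity
  calc ∫ ρ in Ioo (0 : ℝ) 1, normalPDF (1 / ρ - 1) β * tpb (3 / 2) (1 / 2) 1 ρ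
      = ∫ ρ in Ioo (0 : ℝ) 1, √2 / π ^ ((3 : ℝ) / 2) * exp c * exp (-(c / (1 - ρ))) :=
        setIntegral_congr_fun measurableSet_Ioo fun ρ hρ =>
          normalPDF_mul_tpb_three_halves_one_half_one hρ β
    _ = √2 / π ^ ((3 : ℝ) / 2) * exp c * ∫ u in (0 : ℝ)..1, exp (-(c / u)) := by
        rw [integral_const_mul, ← integral_Ioc_eq_integral_Ioo,
          ← intervalIntegral.integral_of_le zero_le_one,
          intervalIntegral.integral_comp_sub_left (fun u => exp (-(c / u))), sub_self, sub_zero]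
    _ = _ := by
        rw [integral_exp_neg_div hc, mul_assoc, mul_sub, ← mul_assoc, ← exp_add, add_neg_cancel,
          exp_zero]
        ring

/-- Marginal density, case a = 3/2, b = 1/2, φ = 1. -/
theorem marginal_density_a_three_halves (β : ℝ) (hβ : β ≠ 0) :
    ∫ ρ in Set.Ioo (0 : ℝ) 1, normalPDF (1 / ρ - 1) β * tpb (3 / 2) (1 / 2) 1 ρ =
      (Real.sqrt 2 / Real.pi ^ ((3 : ℝ) / 2)) *
        (1 - (1 / 2) * Real.exp (β ^ 2 / 2) * β ^ 2 * upperGamma 0 (β ^ 2 / 2)) :=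
  marginal_density_a_three_halves_general β
end
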